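/- arXiv:0706.2368 — 9 statements merged into one kernel-verified Lean document; each statement's English description precedes it below -/
import Mathlib

section
/- Let (λ_k)_{k≥1} be a sequence of real numbers with λ_k ≥ 0 for all k and λ_1 > 0, set Λ_n = ∑_{k=1}^n λ_k, and suppose M = sup_{n≥1} (Λ_n/λ_n)·log((Λ_{n+1}/λ_{n+1})/(Λ_n/λ_n)) is finite (in particular λ_n > 0 for all n). Then for every sequence (a_n)_{n≥1} of non-negative real numbers with ∑_{n=1}^∞ a_n convergent, one has ∑_{n=1}^∞ ∏_{k=1}^n a_k^{λ_k/Λ_n} ≤ e^M · ∑_{n=1}^∞ a_n. -/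
/-!
Write `X_n = Λ_n / λ_n` (`ratio`) and put `c_k = X_{k+1} (X_{k+1} / X_k) ^ (X_k - 1)` (`factor`).
Then `∏_{k ≤ n} c_k ^ λ_k = X_{n+1} ^ Λ_n` telescopes, so weighted AM–GM applied to the numbers
`c_k a_k` gives `G_n ≤ (1/Λ_n - 1/Λ_{n+1}) ∑_{k ≤ n} λ_k c_k a_k`. Summing over `n` and exchanging
the order of summation, the coefficient of `a_k` telescopes to at most
`λ_k c_k / Λ_k = (X_{k+1} / X_k) ^ X_k`, which is `≤ e^M` by the definition of `M`.
-/

open Finset Real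

theorem Finset.sum_range_add_one_eq_sum_Icc {M : Type*} [AddCommMonoid M] (f : ℕ → M) (N : ℕ) :
    ∑ n ∈ range N, f (n + 1) = ∑ n ∈ Icc 1 N, f n := by
  rw [range_eq_Ico, sum_Ico_add' f 0 N 1, zero_add, Ico_add_one_right_eq_Icc]

theorem sum_Icc_le_sum_mul_sub {g b u : ℕ → ℝ}
    (h : ∀ n ≥ 1, g n ≤ (u n - u (n + 1)) * ∑ k ∈ Icc 1 n, b k) (N : ℕ) :
    ∑ n ∈ Icc 1 N, g n ≤ ∑ k ∈ Icc 1 N, b k * (u k - u (N + 1)) := by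
  induction N with
  | zero => simp
  | succ N ih =>
    have htop : ∑ k ∈ Icc 1 (N + 1), b k * (u k - u (N + 1)) =
        ∑ k ∈ Icc 1 N, b k * (u k - u (N + 1)) := by
      rw [sum_Icc_succ_top (by omega), sub_self, mul_zero, add_zero]
    have hsplit : ∑ k ∈ Icc 1 (N + 1), b k * (u k - u (N + 2)) =
        ∑ k ∈ Icc 1 N, b k * (u k - u (N + 1)) +
          (u (N + 1) - u (N + 2)) * ∑ k ∈ Icc 1 (N + 1), b k := by
      rw [← htop, mul_sum, ← sum_add_distrib]
      exact sum_congr rfl fun k _ => by ring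
    rw [sum_Icc_succ_top (by omega), hsplit]
    linarith [h (N + 1) (by omega)]

theorem Real.geom_mean_mul_le {ι : Type*} (s : Finset ι) {w c z : ι → ℝ}
    (hw : ∀ i ∈ s, 0 ≤ w i) (hW : 0 < ∑ i ∈ s, w i) (hc : ∀ i ∈ s, 0 ≤ c i)
    (hz : ∀ i ∈ s, 0 ≤ z i) :
    (∏ i ∈ s, c i ^ w i) ^ (∑ i ∈ s, w i)⁻¹ * ∏ i ∈ s, z i ^ (w i / ∑ i ∈ s, w i) ≤
      (∑ i ∈ s, w i * (c i * z i)) / ∑ i ∈ s, w i := by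
  have hgeom : ∏ i ∈ s, z i ^ (w i / ∑ i ∈ s, w i) =
      (∏ i ∈ s, z i ^ w i) ^ (∑ i ∈ s, w i)⁻¹ := by
    rw [← finsetProd_rpow _ _ fun i hi => rpow_nonneg (hz i hi) _]
    exact prod_congr rfl fun i hi => by rw [div_eq_mul_inv, rpow_mul (hz i hi)]
  rw [hgeom, ← mul_rpow (prod_nonneg fun i hi => rpow_nonneg (hc i hi) _)
      (prod_nonneg fun i hi => rpow_nonneg (hz i hi) _), ← prod_mul_distrib,
    ← prod_congr rfl fun i hi => mul_rpow (hc i hi) (hz i hi)]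
  exact geom_mean_le_arith_mean s w _ hw hW fun i hi => mul_nonneg (hc i hi) (hz i hi)

structure CarlemanWeights (lam Lam : ℕ → ℝ) : Prop where
  pos : ∀ n ≥ 1, 0 < lam n
  partialSum_eq : ∀ n, Lam n = ∑ k ∈ Icc 1 n, lam k

namespace CarlemanWeights

noncomputable def ratio (lam Lam : ℕ → ℝ) (n : ℕ) : ℝ := Lam n / lam n

noncomputable def factor (lam Lam : ℕ → ℝ) (k : ℕ) : ℝ :=
  ratio lam Lam (k + 1) * (ratio lam Lam (k + 1) / ratio lam Lam k) ^ (ratio lam Lam k - 1)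

variable {lam Lam : ℕ → ℝ}

theorem Lam_succ (h : CarlemanWeights lam Lam) (n : ℕ) : Lam (n + 1) = Lam n + lam (n + 1) := by
  rw [h.partialSum_eq, h.partialSum_eq, sum_Icc_succ_top (by omega)]

theorem Lam_pos (h : CarlemanWeights lam Lam) {n : ℕ} (hn : 1 ≤ n) : 0 < Lam n := by
  rw [h.partialSum_eq]
  exact sum_pos (fun k hk => h.pos k (mem_Icc.1 hk).1) ⟨n, mem_Icc.2 ⟨hn, le_rfl⟩⟩

theorem ratio_pos (h : CarlemanWeights lam Lam) {n : ℕ} (hn : 1 ≤ n) : 0 < ratio lam Lam n :=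
  div_pos (h.Lam_pos hn) (h.pos n hn)

theorem factor_pos (h : CarlemanWeights lam Lam) {k : ℕ} (hk : 1 ≤ k) : 0 < factor lam Lam k := by
  have := h.ratio_pos hk
  have := h.ratio_pos (Nat.le_add_left 1 k)
  unfold factor
  positivity

theorem factor_div_ratio (h : CarlemanWeights lam Lam) {k : ℕ} (hk : 1 ≤ k) :
    factor lam Lam k / ratio lam Lam k =
      (ratio lam Lam (k + 1) / ratio lam Lam k) ^ ratio lam Lam k := by
  have hr := h.ratio_pos hk
  have hs := h.ratio_pos (Nat.le_add_left 1 k)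
  rw [factor, rpow_sub_one (div_pos hs hr).ne']
  field_simp

theorem ratio_rpow_mul_factor_rpow (h : CarlemanWeights lam Lam) (n : ℕ) :
    ratio lam Lam (n + 1) ^ Lam n * factor lam Lam (n + 1) ^ lam (n + 1) =
      ratio lam Lam (n + 2) ^ Lam (n + 1) := by
  have hr := h.ratio_pos (Nat.le_add_left 1 n)
  have hs := h.ratio_pos (Nat.le_add_left 1 (n + 1))
  have hexp : (ratio lam Lam (n + 1) - 1) * lam (n + 1) = Lam n := by
    have := (h.pos (n + 1) (by omega)).ne'
    rw [ratio, h.Lam_succ]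
    field_simp
    ring
  rw [factor, mul_rpow hs.le (rpow_nonneg (div_nonneg hs.le hr.le) _),
    ← rpow_mul (div_nonneg hs.le hr.le), hexp, div_rpow hs.le hr.le, h.Lam_succ, rpow_add hs]
  have := (rpow_pos_of_pos hr (Lam n)).ne'
  field_simp

theorem prod_factor_rpow (h : CarlemanWeights lam Lam) (n : ℕ) :
    ∏ k ∈ Icc 1 n, factor lam Lam k ^ lam k = ratio lam Lam (n + 1) ^ Lam n := by
  induction n with
  | zero => simp [h.partialSum_eq 0]
  | succ n ih => rw [prod_Icc_succ_top (by omega), ih, h.ratio_rpow_mul_factor_rpow]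

theorem prod_rpow_div_le (h : CarlemanWeights lam Lam) {a : ℕ → ℝ} (ha : ∀ n ≥ 1, 0 ≤ a n)
    {n : ℕ} (hn : 1 ≤ n) :
    ∏ k ∈ Icc 1 n, a k ^ (lam k / Lam n) ≤
      ((Lam n)⁻¹ - (Lam (n + 1))⁻¹) * ∑ k ∈ Icc 1 n, lam k * (factor lam Lam k * a k) := by
  have hW := h.Lam_pos hn
  have hr := h.ratio_pos (Nat.le_add_left 1 n)
  have hamgm := geom_mean_mul_le (Icc 1 n) (w := lam) (c := factor lam Lam) (z := a)
    (fun k hk => (h.pos k (mem_Icc.1 hk).1).le) (h.partialSum_eq n ▸ hW)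
    (fun k hk => (h.factor_pos (mem_Icc.1 hk).1).le) fun k hk => ha k (mem_Icc.1 hk).1
  rw [← h.partialSum_eq, h.prod_factor_rpow, ← rpow_mul hr.le, mul_inv_cancel₀ hW.ne',
    rpow_one] at hamgm
  have hid : (Lam n)⁻¹ - (Lam (n + 1))⁻¹ = (ratio lam Lam (n + 1) * Lam n)⁻¹ := by
    have := (h.pos (n + 1) (by omega)).ne'
    have := (h.Lam_pos (Nat.le_add_left 1 n)).ne'
    rw [ratio]
    field_simp
    rw [h.Lam_succ]
    ring
  rw [hid, mul_inv, mul_assoc, inv_mul_eq_div, ← div_eq_inv_mul]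
  exact (le_div_iff₀' hr).2 hamgm

theorem summand_le_exp_mul (h : CarlemanWeights lam Lam) {M : ℝ}
    (hM : ∀ n ≥ 1, Lam n / lam n * log (Lam (n + 1) / lam (n + 1) / (Lam n / lam n)) ≤ M)
    {a : ℕ → ℝ} (ha : ∀ n ≥ 1, 0 ≤ a n) {k : ℕ} (hk : 1 ≤ k) {t : ℝ} (ht : 0 ≤ t) :
    lam k * (factor lam Lam k * a k) * ((Lam k)⁻¹ - t) ≤ exp M * a k := by
  have hr := h.ratio_pos hk
  have hs := h.ratio_pos (Nat.le_add_left 1 k)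
  have hfactor : factor lam Lam k / ratio lam Lam k ≤ exp M := by
    rw [h.factor_div_ratio hk, rpow_def_of_pos (div_pos hs hr), mul_comm]
    exact exp_le_exp.2 (hM k hk)
  calc lam k * (factor lam Lam k * a k) * ((Lam k)⁻¹ - t)
      ≤ lam k * (factor lam Lam k * a k) * (Lam k)⁻¹ := by
        have := (h.factor_pos hk).le
        have := (h.pos k hk).le
        have := ha k hk
        gcongr
        linarith
    _ = factor lam Lam k / ratio lam Lam k * a k := by
        have := (h.pos k hk).ne'
        rw [ratio]
        field_simp
    _ ≤ exp M * a k := mul_le_mul_of_nonneg_right hfactor (ha k hk)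

end CarlemanWeights

theorem weighted_carleman_general
    (lam : ℕ → ℝ)
    (hlampos : ∀ n ≥ 1, 0 < lam n)
    (Lam : ℕ → ℝ) (hLam : ∀ n, Lam n = ∑ k ∈ Finset.Icc 1 n, lam k)
    (M : ℝ)
    (hM : IsLUB {x : ℝ | ∃ n ≥ 1, x = (Lam n / lam n) *
        Real.log ((Lam (n + 1) / lam (n + 1)) / (Lam n / lam n))} M)
    (a : ℕ → ℝ) (ha : ∀ n ≥ 1, 0 ≤ a n) (hsum : Summable (fun n : ℕ => a (n + 1))) :
    ∑' n : ℕ, ∏ k ∈ Finset.Icc 1 (n + 1), a k ^ (lam k / Lam (n + 1)) ≤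
      Real.exp M * ∑' n : ℕ, a (n + 1) := by
  have hw : CarlemanWeights lam Lam := ⟨hlampos, hLam⟩
  refine tsum_le_of_sum_range_le
    (fun n => prod_nonneg fun k hk => rpow_nonneg (ha k (mem_Icc.1 hk).1) _) fun N => ?_
  rw [sum_range_add_one_eq_sum_Icc (fun n => ∏ k ∈ Icc 1 n, a k ^ (lam k / Lam n))]
  calc ∑ n ∈ Icc 1 N, ∏ k ∈ Icc 1 n, a k ^ (lam k / Lam n)
      ≤ ∑ k ∈ Icc 1 N,
          lam k * (CarlemanWeights.factor lam Lam k * a k) * ((Lam k)⁻¹ - (Lam (N + 1))⁻¹) :=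
        sum_Icc_le_sum_mul_sub (fun n hn => hw.prod_rpow_div_le ha hn) N
    _ ≤ ∑ k ∈ Icc 1 N, exp M * a k :=
        sum_le_sum fun k hk => hw.summand_le_exp_mul (fun n hn => hM.1 ⟨n, hn, rfl⟩) ha
          (mem_Icc.1 hk).1 (inv_nonneg.2 (hw.Lam_pos (by omega)).le)
    _ ≤ exp M * ∑' n, a (n + 1) := by
        rw [← mul_sum, ← sum_range_add_one_eq_sum_Icc]
        gcongr
        exact hsum.sum_le_tsum _ fun n _ => ha (n + 1) (by omega)

/-- Weighted Carleman inequality (Theorem 1 of the paper): if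
`M = sup_n (Λ_n/λ_n) log((Λ_{n+1}/λ_{n+1})/(Λ_n/λ_n))` is finite, then
`∑ G_n ≤ e^M ∑ a_n`. -/
theorem weighted_carleman
    (lam : ℕ → ℝ) (hlam : ∀ k ≥ 1, 0 ≤ lam k) (hlam1 : 0 < lam 1)
    (hlampos : ∀ n ≥ 1, 0 < lam n)
    (Lam : ℕ → ℝ) (hLam : ∀ n, Lam n = ∑ k ∈ Finset.Icc 1 n, lam k)
    (M : ℝ)
    (hM : IsLUB {x : ℝ | ∃ n ≥ 1, x = (Lam n / lam n) *
        Real.log ((Lam (n + 1) / lam (n + 1)) / (Lam n / lam n))} M)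
    (a : ℕ → ℝ) (ha : ∀ n ≥ 1, 0 ≤ a n) (hsum : Summable (fun n : ℕ => a (n + 1))) :
    ∑' n : ℕ, ∏ k ∈ Finset.Icc 1 (n + 1), a k ^ (lam k / Lam (n + 1)) ≤
      Real.exp M * ∑' n : ℕ, a (n + 1) :=
  weighted_carleman_general lam hlampos Lam hLam M hM a ha hsum
end

section
/- Let (λ_k)_{k≥1} satisfy λ_k > 0 for all k, set Λ_n = ∑_{k=1}^n λ_k, and suppose M = sup_{n≥1} (Λ_n/λ_n)·log((Λ_{n+1}/λ_{n+1})/(Λ_n/λ_n)) is finite. Then for every integer N ≥ 1 and every choice of non-negative reals a_1, …, a_N, one has ∑_{n=1}^N ∏_{k=1}^n a_k^{λ_k/Λ_n} ≤ e^M · ∑_{n=1}^N a_n. -/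
/-!
With `t_k = Λ_k/λ_k` and `c_k = (t_{k+1}/t_k)^{t_k} ≤ e^M`, the numbers `t_k c_k` have weighted
geometric mean `∏_{k≤n} (t_k c_k)^{λ_k/Λ_n} = t_{n+1}` (a telescoping product). Weighted AM-GM
applied to `t_k c_k a_k` therefore gives
`G_n ≤ (Λ_n t_{n+1})⁻¹ ∑_{k≤n} λ_k t_k c_k a_k = (Λ_n⁻¹ - Λ_{n+1}⁻¹) ∑_{k≤n} Λ_k c_k a_k`,
and summing over `n` by parts bounds `∑ G_n` by `∑ c_k a_k ≤ e^M ∑ a_k`.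
-/

open Finset Real

theorem sum_Icc_sub_mul_sum_Icc {R : Type*} [CommRing R] (d b : ℕ → R) (N : ℕ) :
    ∑ n ∈ Icc 1 N, (d n - d (n + 1)) * ∑ k ∈ Icc 1 n, b k =
      ∑ k ∈ Icc 1 N, d k * b k - d (N + 1) * ∑ k ∈ Icc 1 N, b k := by
  induction N with
  | zero => simp
  | succ N ih =>
    simp only [sum_Icc_succ_top (Nat.le_add_left 1 N), ih]
    ring

theorem sum_Icc_sub_mul_sum_Icc_le {R : Type*} [CommRing R] [PartialOrder R] [IsOrderedRing R]
    (d b : ℕ → R) (N : ℕ) (hd : 0 ≤ d (N + 1)) (hb : ∀ k ∈ Icc 1 N, 0 ≤ b k) :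
    ∑ n ∈ Icc 1 N, (d n - d (n + 1)) * ∑ k ∈ Icc 1 n, b k ≤
      ∑ k ∈ Icc 1 N, d k * b k := by
  rw [sum_Icc_sub_mul_sum_Icc, sub_le_self_iff]
  exact mul_nonneg hd (sum_nonneg hb)

theorem Real.prod_rpow_mul_prod_rpow_le_arith_mean_weighted {ι : Type*} (s : Finset ι)
    (w c z : ι → ℝ) (hw : ∀ i ∈ s, 0 ≤ w i) (hw' : ∑ i ∈ s, w i = 1)
    (hc : ∀ i ∈ s, 0 ≤ c i) (hz : ∀ i ∈ s, 0 ≤ z i) :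
    (∏ i ∈ s, c i ^ w i) * ∏ i ∈ s, z i ^ w i ≤ ∑ i ∈ s, w i * (c i * z i) := by
  rw [← prod_mul_distrib, prod_congr rfl fun i hi => (mul_rpow (hc i hi) (hz i hi)).symm]
  exact geom_mean_le_arith_mean_weighted s w _ hw hw' fun i hi => mul_nonneg (hc i hi) (hz i hi)

noncomputable def weightRatio (lam Lam : ℕ → ℝ) (k : ℕ) : ℝ := Lam k / lam k

noncomputable def carlemanFactor (lam Lam : ℕ → ℝ) (k : ℕ) : ℝ :=
  (weightRatio lam Lam (k + 1) / weightRatio lam Lam k) ^ weightRatio lam Lam k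

section WeightedCarleman

variable {lam Lam : ℕ → ℝ}

theorem partialSum_zero (hLam : ∀ n, Lam n = ∑ k ∈ Icc 1 n, lam k) : Lam 0 = 0 := by
  simp [hLam]

theorem partialSum_succ (hLam : ∀ n, Lam n = ∑ k ∈ Icc 1 n, lam k) (n : ℕ) :
    Lam (n + 1) = Lam n + lam (n + 1) := by
  rw [hLam, hLam, sum_Icc_succ_top (Nat.le_add_left 1 n)]

theorem partialSum_pos (hlam : ∀ k ≥ 1, 0 < lam k)
    (hLam : ∀ n, Lam n = ∑ k ∈ Icc 1 n, lam k)
    {n : ℕ} (hn : 1 ≤ n) : 0 < Lam n := by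
  rw [hLam]
  exact sum_pos (fun k hk => hlam k (mem_Icc.mp hk).1) ⟨1, mem_Icc.mpr ⟨le_rfl, hn⟩⟩

theorem weightRatio_pos (hlam : ∀ k ≥ 1, 0 < lam k)
    (hLam : ∀ n, Lam n = ∑ k ∈ Icc 1 n, lam k)
    {k : ℕ} (hk : 1 ≤ k) : 0 < weightRatio lam Lam k :=
  div_pos (partialSum_pos hlam hLam hk) (hlam k hk)

theorem weightRatio_mul_cancel {k : ℕ} (hk : lam k ≠ 0) : weightRatio lam Lam k * lam k = Lam k :=
  div_mul_cancel₀ _ hk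

theorem inv_partialSum_sub_inv_succ (hlam : ∀ k ≥ 1, 0 < lam k)
    (hLam : ∀ n, Lam n = ∑ k ∈ Icc 1 n, lam k) {n : ℕ} (hn : 1 ≤ n) :
    (Lam n)⁻¹ - (Lam (n + 1))⁻¹ = (Lam n)⁻¹ / weightRatio lam Lam (n + 1) := by
  have := partialSum_pos hlam hLam hn
  have := hlam (n + 1) (Nat.le_add_left 1 n)
  rw [weightRatio, partialSum_succ hLam]
  field_simp
  ring

theorem carlemanFactor_le_exp (hlam : ∀ k ≥ 1, 0 < lam k)
    (hLam : ∀ n, Lam n = ∑ k ∈ Icc 1 n, lam k) {M : ℝ}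
    (hM : ∀ n ≥ 1, (Lam n / lam n) * log ((Lam (n + 1) / lam (n + 1)) / (Lam n / lam n)) ≤ M)
    {k : ℕ} (hk : 1 ≤ k) : carlemanFactor lam Lam k ≤ exp M := by
  have hpos : 0 < weightRatio lam Lam (k + 1) / weightRatio lam Lam k :=
    div_pos (weightRatio_pos hlam hLam (Nat.le_add_left 1 k)) (weightRatio_pos hlam hLam hk)
  rw [carlemanFactor, rpow_def_of_pos hpos, exp_le_exp, mul_comm]
  exact hM k hk

theorem carlemanFactor_nonneg (hlam : ∀ k ≥ 1, 0 < lam k)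
    (hLam : ∀ n, Lam n = ∑ k ∈ Icc 1 n, lam k) {k : ℕ} (hk : 1 ≤ k) :
    0 ≤ carlemanFactor lam Lam k :=
  rpow_nonneg (div_nonneg (weightRatio_pos hlam hLam (by omega)).le
    (weightRatio_pos hlam hLam hk).le) _

theorem prod_weightRatio_mul_carlemanFactor_rpow (hlam : ∀ k ≥ 1, 0 < lam k)
    (hLam : ∀ n, Lam n = ∑ k ∈ Icc 1 n, lam k) (n : ℕ) :
    ∏ k ∈ Icc 1 n, (weightRatio lam Lam k * carlemanFactor lam Lam k) ^ lam k =
      weightRatio lam Lam (n + 1) ^ Lam n := by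
  induction n with
  | zero => simp [partialSum_zero hLam]
  | succ n ih =>
    set t := weightRatio lam Lam
    have ht : 0 < t (n + 1) := weightRatio_pos hlam hLam (Nat.le_add_left 1 n)
    have ht' : 0 < t (n + 2) := weightRatio_pos hlam hLam (by omega)
    have hfactor : (t (n + 1) * carlemanFactor lam Lam (n + 1)) ^ lam (n + 1) =
        t (n + 1) ^ lam (n + 1) * (t (n + 2) / t (n + 1)) ^ Lam (n + 1) := by
      rw [carlemanFactor, mul_rpow ht.le (rpow_nonneg (div_pos ht' ht).le _),
        ← rpow_mul (div_pos ht' ht).le,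
        weightRatio_mul_cancel (hlam (n + 1) (Nat.le_add_left 1 n)).ne']
    rw [prod_Icc_succ_top (Nat.le_add_left 1 n), ih, hfactor, ← mul_assoc, ← rpow_add ht,
      ← partialSum_succ hLam, div_rpow ht'.le ht.le,
      mul_div_cancel₀ _ (rpow_pos_of_pos ht _).ne']

theorem prod_weightRatio_mul_carlemanFactor_rpow_div (hlam : ∀ k ≥ 1, 0 < lam k)
    (hLam : ∀ n, Lam n = ∑ k ∈ Icc 1 n, lam k) {n : ℕ} (hn : 1 ≤ n) :
    ∏ k ∈ Icc 1 n, (weightRatio lam Lam k * carlemanFactor lam Lam k) ^ (lam k / Lam n) =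
      weightRatio lam Lam (n + 1) := by
  have hLn := partialSum_pos hlam hLam hn
  have hbase : ∀ k ∈ Icc 1 n, 0 ≤ weightRatio lam Lam k * carlemanFactor lam Lam k :=
    fun k hk => mul_nonneg (weightRatio_pos hlam hLam (mem_Icc.mp hk).1).le
      (carlemanFactor_nonneg hlam hLam (mem_Icc.mp hk).1)
  rw [prod_congr rfl fun k hk => by rw [div_eq_mul_inv, rpow_mul (hbase k hk)],
    finsetProd_rpow _ _ fun k hk => rpow_nonneg (hbase k hk) _,
    prod_weightRatio_mul_carlemanFactor_rpow hlam hLam, ← rpow_mul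
    (weightRatio_pos hlam hLam (Nat.le_add_left 1 n)).le, mul_inv_cancel₀ hLn.ne', rpow_one]

theorem geomMean_le_inv_sub_inv_mul_sum (hlam : ∀ k ≥ 1, 0 < lam k)
    (hLam : ∀ n, Lam n = ∑ k ∈ Icc 1 n, lam k)
    {a : ℕ → ℝ} (ha : ∀ n ≥ 1, 0 ≤ a n) {n : ℕ} (hn : 1 ≤ n) :
    ∏ k ∈ Icc 1 n, a k ^ (lam k / Lam n) ≤
      ((Lam n)⁻¹ - (Lam (n + 1))⁻¹) *
        ∑ k ∈ Icc 1 n, Lam k * (carlemanFactor lam Lam k * a k) := by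
  set t := weightRatio lam Lam
  set c := carlemanFactor lam Lam
  have hLn := partialSum_pos hlam hLam hn
  have amgm := prod_rpow_mul_prod_rpow_le_arith_mean_weighted (Icc 1 n) (fun k => lam k / Lam n)
    (fun k => t k * c k) a (fun k hk => div_nonneg (hlam k (mem_Icc.mp hk).1).le hLn.le)
    (by rw [← sum_div, ← hLam, div_self hLn.ne'])
    (fun k hk => mul_nonneg (weightRatio_pos hlam hLam (mem_Icc.mp hk).1).le
      (carlemanFactor_nonneg hlam hLam (mem_Icc.mp hk).1)) (fun k hk => ha k (mem_Icc.mp hk).1)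
  have hmean : ∑ k ∈ Icc 1 n, lam k / Lam n * (t k * c k * a k) =
      (Lam n)⁻¹ * ∑ k ∈ Icc 1 n, Lam k * (c k * a k) := by
    rw [mul_sum]
    refine sum_congr rfl fun k hk => ?_
    rw [← weightRatio_mul_cancel (Lam := Lam) (hlam k (mem_Icc.mp hk).1).ne']
    ring
  rw [prod_weightRatio_mul_carlemanFactor_rpow_div hlam hLam hn, hmean] at amgm
  rw [inv_partialSum_sub_inv_succ hlam hLam hn, div_mul_eq_mul_div, le_div_iff₀
    (weightRatio_pos hlam hLam (Nat.le_add_left 1 n)), mul_comm]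
  exact amgm

end WeightedCarleman

theorem weighted_carleman_finite_general
    (lam : ℕ → ℝ) (hlam : ∀ k ≥ 1, 0 < lam k)
    (Lam : ℕ → ℝ) (hLam : ∀ n, Lam n = ∑ k ∈ Finset.Icc 1 n, lam k)
    (M : ℝ)
    (hM : IsLUB {x : ℝ | ∃ n ≥ 1, x = (Lam n / lam n) *
        Real.log ((Lam (n + 1) / lam (n + 1)) / (Lam n / lam n))} M)
    (N : ℕ)
    (a : ℕ → ℝ) (ha : ∀ n ≥ 1, 0 ≤ a n) :
    ∑ n ∈ Finset.Icc 1 N, ∏ k ∈ Finset.Icc 1 n, a k ^ (lam k / Lam n) ≤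
      Real.exp M * ∑ n ∈ Finset.Icc 1 N, a n := by
  set c := carlemanFactor lam Lam
  have hΛ : ∀ k ∈ Icc 1 N, 0 < Lam k := fun k hk => partialSum_pos hlam hLam (mem_Icc.mp hk).1
  have hc : ∀ k ∈ Icc 1 N, c k ≤ exp M := fun k hk =>
    carlemanFactor_le_exp hlam hLam (fun n hn => hM.1 ⟨n, hn, rfl⟩) (mem_Icc.mp hk).1
  have hca : ∀ k ∈ Icc 1 N, 0 ≤ c k * a k := fun k hk =>
    mul_nonneg (carlemanFactor_nonneg hlam hLam (mem_Icc.mp hk).1) (ha k (mem_Icc.mp hk).1)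
  calc ∑ n ∈ Icc 1 N, ∏ k ∈ Icc 1 n, a k ^ (lam k / Lam n)
      ≤ ∑ n ∈ Icc 1 N,
          ((Lam n)⁻¹ - (Lam (n + 1))⁻¹) * ∑ k ∈ Icc 1 n, Lam k * (c k * a k) :=
        sum_le_sum fun n hn => geomMean_le_inv_sub_inv_mul_sum hlam hLam ha (mem_Icc.mp hn).1
    _ ≤ ∑ k ∈ Icc 1 N, (Lam k)⁻¹ * (Lam k * (c k * a k)) :=
        sum_Icc_sub_mul_sum_Icc_le _ _ N (inv_nonneg.mpr (partialSum_pos hlam hLam (by omega)).le)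
          fun k hk => mul_nonneg (hΛ k hk).le (hca k hk)
    _ = ∑ k ∈ Icc 1 N, c k * a k :=
        sum_congr rfl fun k hk => inv_mul_cancel_left₀ (hΛ k hk).ne' _
    _ ≤ exp M * ∑ n ∈ Icc 1 N, a n := by
        rw [mul_sum]
        exact sum_le_sum fun k hk => mul_le_mul_of_nonneg_right (hc k hk) (ha k (mem_Icc.mp hk).1)

/-- Finite-sum version of the weighted Carleman inequality: for every `N ≥ 1`,
`∑_{n=1}^N G_n ≤ e^M ∑_{n=1}^N a_n`. -/
theorem weighted_carleman_finite
    (lam : ℕ → ℝ) (hlam : ∀ k ≥ 1, 0 < lam k)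
    (Lam : ℕ → ℝ) (hLam : ∀ n, Lam n = ∑ k ∈ Finset.Icc 1 n, lam k)
    (M : ℝ)
    (hM : IsLUB {x : ℝ | ∃ n ≥ 1, x = (Lam n / lam n) *
        Real.log ((Lam (n + 1) / lam (n + 1)) / (Lam n / lam n))} M)
    (N : ℕ) (hN : 1 ≤ N)
    (a : ℕ → ℝ) (ha : ∀ n ≥ 1, 0 ≤ a n) :
    ∑ n ∈ Finset.Icc 1 N, ∏ k ∈ Finset.Icc 1 n, a k ^ (lam k / Lam n) ≤
      Real.exp M * ∑ n ∈ Finset.Icc 1 N, a n :=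
  weighted_carleman_finite_general lam hlam Lam hLam M hM N a ha
end

section
/- For every integer n ≥ 1 and every real 0 ≤ r ≤ 1, one has (1/(r+1))·n·(n+1)^r ≤ ∑_{i=1}^n i^r. -/
open Finset

/-- Bernoulli's inequality `(1 + 1/y)^r ≤ 1 + r/y`, multiplied through by `y^(r+1)`. -/
theorem Real.mul_add_one_rpow_le {y r : ℝ} (hy : 0 < y) (hr0 : 0 ≤ r) (hr1 : r ≤ 1) :
    y * (y + 1) ^ r ≤ (y + r) * y ^ r := by
  have hbernoulli : (1 + y⁻¹) ^ r ≤ 1 + r * y⁻¹ :=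
    rpow_one_add_le_one_add_mul_self (by linarith [inv_pos.mpr hy]) hr0 hr1
  calc y * (y + 1) ^ r = y * y ^ r * (1 + y⁻¹) ^ r := by
        rw [mul_assoc, ← Real.mul_rpow hy.le (by positivity), mul_one_add,
          mul_inv_cancel₀ hy.ne']
    _ ≤ y * y ^ r * (1 + r * y⁻¹) := by gcongr
    _ = (y + r) * y ^ r := by field_simp

theorem nat_mul_add_one_rpow_le_sum_rpow (n : ℕ) {r : ℝ} (hr0 : 0 ≤ r) (hr1 : r ≤ 1) :
    n * ((n : ℝ) + 1) ^ r ≤ (r + 1) * ∑ i ∈ Icc 1 n, (i : ℝ) ^ r := by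
  induction n with
  | zero => simp
  | succ m ih =>
    have hstep := Real.mul_add_one_rpow_le (y := (m : ℝ) + 1) (by positivity) hr0 hr1
    rw [sum_Icc_succ_top (by omega)]
    push_cast
    linarith

theorem sum_pow_lower_bound_general (n : ℕ) (r : ℝ) (hr0 : 0 ≤ r) (hr1 : r ≤ 1) :
    (1 / (r + 1)) * n * ((n : ℝ) + 1) ^ r ≤ ∑ i ∈ Finset.Icc 1 n, (i : ℝ) ^ r := by
  rw [mul_assoc, one_div_mul_eq_div, div_le_iff₀' (by linarith)]
  exact nat_mul_add_one_rpow_le_sum_rpow n hr0 hr1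

/-- Lower bound of Lemma 1: `(1/(r+1)) n (n+1)^r ≤ ∑_{i=1}^n i^r` for `0 ≤ r ≤ 1`. -/
theorem sum_pow_lower_bound (n : ℕ) (hn : 1 ≤ n) (r : ℝ) (hr0 : 0 ≤ r) (hr1 : r ≤ 1) :
    (1 / (r + 1)) * n * ((n : ℝ) + 1) ^ r ≤ ∑ i ∈ Finset.Icc 1 n, (i : ℝ) ^ r :=
  sum_pow_lower_bound_general n r hr0 hr1
end

section
/- For every integer n ≥ 1 and every real 0 < r ≤ 1, one has ∑_{i=1}^n i^r ≤ (r/(r+1)) · n^r (n+1)^r / ((n+1)^r − n^r). -/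
/-! Induction on `n`, starting from `n = 0` where both sides vanish. Writing `a, b, c` for
`n ^ r, (n + 1) ^ r, (n + 2) ^ r`, the inductive step is equivalent to
`(b - a) * (c - b) ≤ r * (b ^ 2 - a * c)`; dividing by `b ^ 2` this is
`(1 - u) * (v - 1) ≤ r * (1 - u * v)` with `u = (1 - x) ^ r`, `v = (1 + x) ^ r`, `x = 1 / (n + 1)`.
Both sides agree at `x = 0`, and the difference is increasing in `x` because
`(1 + x) ^ (1 - r) - (1 - x) ^ (1 - r) ≥ 2 * (1 - r) * x`, which in turn follows by differentiating
once more and using AM-GM. -/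

open Real Set

theorem le_of_hasDerivAt_nonneg_of_mem_Icc {f f' : ℝ → ℝ} {a b x : ℝ}
    (hf : ContinuousOn f (Icc a b)) (hf' : ∀ y ∈ Ioo a b, HasDerivAt f (f' y) y)
    (hf'₀ : ∀ y ∈ Ioo a b, 0 ≤ f' y) (hx : x ∈ Icc a b) : f a ≤ f x := by
  have hmono : MonotoneOn f (Icc a b) :=
    monotoneOn_of_hasDerivWithinAt_nonneg (convex_Icc a b) hf
      (fun y hy => (hf' y (by rwa [interior_Icc] at hy)).hasDerivWithinAt)
      (fun y hy => hf'₀ y (by rwa [interior_Icc] at hy))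
  exact hmono (left_mem_Icc.2 (hx.1.trans hx.2)) hx hx.1

theorem two_mul_mul_le_one_add_rpow_sub_one_sub_rpow {s x : ℝ} (hs0 : 0 ≤ s) (hs1 : s ≤ 1)
    (hx0 : 0 ≤ x) (hx1 : x ≤ 1) : 2 * s * x ≤ (1 + x) ^ s - (1 - x) ^ s := by
  set g : ℝ → ℝ := fun y => (1 + y) ^ s - (1 - y) ^ s - 2 * s * y
  have hderiv : ∀ y ∈ Ioo (0 : ℝ) 1,
      HasDerivAt g (s * ((1 + y) ^ (s - 1) + (1 - y) ^ (s - 1) - 2)) y := by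
    rintro y ⟨hy0, hy1⟩
    have h1 := ((hasDerivAt_id' y).const_add 1).rpow_const (p := s) (Or.inl (by linarith))
    have h2 := ((hasDerivAt_id' y).const_sub 1).rpow_const (p := s) (Or.inl (by linarith))
    exact ((h1.fun_sub h2).fun_sub ((hasDerivAt_id' y).const_mul (2 * s))).congr_deriv
      (by ring)
  have hderiv_nonneg : ∀ y ∈ Ioo (0 : ℝ) 1,
      0 ≤ s * ((1 + y) ^ (s - 1) + (1 - y) ^ (s - 1) - 2) := by
    rintro y ⟨hy0, hy1⟩
    -- AM-GM, the product of the two powers being `(1 - y ^ 2) ^ (s - 1) ≥ 1`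
    have hprod : 1 ≤ (1 + y) ^ (s - 1) * (1 - y) ^ (s - 1) := by
      rw [← mul_rpow (by linarith) (by linarith)]
      exact one_le_rpow_of_pos_of_le_one_of_nonpos (by nlinarith) (by nlinarith) (by linarith)
    have := rpow_pos_of_pos (by linarith : 0 < 1 + y) (s - 1)
    have := rpow_pos_of_pos (by linarith : 0 < 1 - y) (s - 1)
    have : 2 ≤ (1 + y) ^ (s - 1) + (1 - y) ^ (s - 1) := by
      nlinarith [sq_nonneg ((1 + y) ^ (s - 1) - (1 - y) ^ (s - 1))]
    exact mul_nonneg hs0 (by linarith)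
  have hcont : Continuous g := by fun_prop (disch := exact fun _ => Or.inr hs0)
  have := le_of_hasDerivAt_nonneg_of_mem_Icc hcont.continuousOn hderiv hderiv_nonneg ⟨hx0, hx1⟩
  simpa [g] using this

theorem one_sub_rpow_mul_rpow_sub_one_le {r x : ℝ} (hr0 : 0 ≤ r) (hr1 : r ≤ 1)
    (hx0 : 0 ≤ x) (hx1 : x ≤ 1) :
    (1 - (1 - x) ^ r) * ((1 + x) ^ r - 1) ≤ r * (1 - (1 - x) ^ r * (1 + x) ^ r) := by
  set g : ℝ → ℝ := fun y =>
    r * (1 - (1 - y) ^ r * (1 + y) ^ r) - (1 - (1 - y) ^ r) * ((1 + y) ^ r - 1)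
  set g' : ℝ → ℝ := fun y => r * ((1 - y) ^ (r - 1) - (1 + y) ^ (r - 1)
    - 2 * (1 - r) * y * ((1 - y) ^ (r - 1) * (1 + y) ^ (r - 1)))
  have hderiv : ∀ y ∈ Ioo (0 : ℝ) 1, HasDerivAt g (g' y) y := by
    rintro y ⟨hy0, hy1⟩
    have hm : 0 < 1 - y := by linarith
    have hp : 0 < 1 + y := by linarith
    have hu := ((hasDerivAt_id' y).const_sub 1).rpow_const (p := r) (Or.inl hm.ne')
    have hv := ((hasDerivAt_id' y).const_add 1).rpow_const (p := r) (Or.inl hp.ne')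
    refine (((hu.fun_mul hv).const_sub 1).const_mul r |>.fun_sub
      ((hu.const_sub 1).fun_mul (hv.sub_const 1))).congr_deriv ?_
    have eu : (1 - y) ^ r = (1 - y) ^ (r - 1) * (1 - y) := by
      rw [← rpow_add_one hm.ne', sub_add_cancel]
    have ev : (1 + y) ^ r = (1 + y) ^ (r - 1) * (1 + y) := by
      rw [← rpow_add_one hp.ne', sub_add_cancel]
    simp only [g']
    rw [eu, ev]
    ring
  have hderiv_nonneg : ∀ y ∈ Ioo (0 : ℝ) 1, 0 ≤ g' y := by
    rintro y ⟨hy0, hy1⟩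
    have hm : 0 < 1 - y := by linarith
    have hp : 0 < 1 + y := by linarith
    have hP := rpow_pos_of_pos hm (r - 1)
    have hQ := rpow_pos_of_pos hp (r - 1)
    have hA := two_mul_mul_le_one_add_rpow_sub_one_sub_rpow (by linarith : 0 ≤ 1 - r)
      (by linarith : 1 - r ≤ 1) hy0.le hy1.le
    rw [← neg_sub r 1, rpow_neg hm.le, rpow_neg hp.le, neg_sub] at hA
    have : g' y = r * ((1 - y) ^ (r - 1) * (1 + y) ^ (r - 1)) *
        (((1 + y) ^ (r - 1))⁻¹ - ((1 - y) ^ (r - 1))⁻¹ - 2 * (1 - r) * y) := by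
      simp only [g']
      field_simp
    rw [this]
    exact mul_nonneg (by positivity) (sub_nonneg.2 hA)
  have hcont : Continuous g := by fun_prop (disch := exact fun _ => Or.inr hr0)
  have := le_of_hasDerivAt_nonneg_of_mem_Icc hcont.continuousOn hderiv hderiv_nonneg ⟨hx0, hx1⟩
  simpa [g] using this

theorem rpow_sub_rpow_mul_rpow_sub_rpow_le {r t h : ℝ} (hr0 : 0 ≤ r) (hr1 : r ≤ 1)
    (ht : 0 < t) (hh0 : 0 ≤ h) (hh1 : h ≤ t) :
    (t ^ r - (t - h) ^ r) * ((t + h) ^ r - t ^ r) ≤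
      r * ((t ^ r) ^ 2 - (t - h) ^ r * (t + h) ^ r) := by
  have hB := one_sub_rpow_mul_rpow_sub_one_le hr0 hr1 (div_nonneg hh0 ht.le)
    ((div_le_one ht).2 hh1)
  have hscale : ∀ z : ℝ, 0 ≤ z → z ^ r * t ^ r = (z * t) ^ r := fun z hz =>
    (mul_rpow hz ht.le).symm
  have hm : (1 - h / t) ^ r * t ^ r = (t - h) ^ r := by
    rw [hscale _ (by rw [sub_nonneg, div_le_one ht]; exact hh1)]
    congr 1; field_simp
  have hp : (1 + h / t) ^ r * t ^ r = (t + h) ^ r := by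
    rw [hscale _ (by positivity)]
    congr 1; field_simp
  have := mul_le_mul_of_nonneg_right hB (sq_nonneg (t ^ r))
  rw [← hm, ← hp]
  linear_combination this

noncomputable def powSumBound (r x : ℝ) : ℝ :=
  r / (r + 1) * (x ^ r * (x + 1) ^ r / ((x + 1) ^ r - x ^ r))

theorem powSumBound_add_rpow_le {r x : ℝ} (hr0 : 0 < r) (hr1 : r ≤ 1) (hx : 0 ≤ x) :
    powSumBound r x + (x + 1) ^ r ≤ powSumBound r (x + 1) := by
  have key := rpow_sub_rpow_mul_rpow_sub_rpow_le hr0.le hr1 (by positivity : 0 < x + 1)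
    zero_le_one (by linarith)
  rw [add_sub_cancel_right] at key
  unfold powSumBound
  set a := x ^ r
  set b := (x + 1) ^ r
  set c := (x + 1 + 1) ^ r
  have hab : a < b := rpow_lt_rpow hx (by linarith) hr0
  have hbc : b < c := rpow_lt_rpow (by linarith) (by linarith) hr0
  have : r / (r + 1) * (b * c / (c - b)) - (r / (r + 1) * (a * b / (b - a)) + b) =
      b * (r * (b ^ 2 - a * c) - (b - a) * (c - b)) / ((r + 1) * ((b - a) * (c - b))) := by
    have : b - a ≠ 0 := by linarith
    have : c - b ≠ 0 := by linarith
    have : r + 1 ≠ 0 := by linarith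
    field_simp
    ring
  rw [← sub_nonneg, this]
  have := sub_nonneg.2 key
  have := sub_pos.2 hab
  have := sub_pos.2 hbc
  positivity

theorem sum_pow_upper_bound_general (n : ℕ) (r : ℝ) (hr0 : 0 < r) (hr1 : r ≤ 1) :
    ∑ i ∈ Finset.Icc 1 n, (i : ℝ) ^ r ≤
      (r / (r + 1)) * ((n : ℝ) ^ r * ((n : ℝ) + 1) ^ r /
        (((n : ℝ) + 1) ^ r - (n : ℝ) ^ r)) := by
  induction n with
  | zero => simp [zero_rpow hr0.ne']
  | succ m ih =>
    rw [Finset.sum_Icc_succ_top (Nat.le_add_left 1 m), Nat.cast_succ]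
    calc _ ≤ powSumBound r m + ((m : ℝ) + 1) ^ r := add_le_add_left ih _
      _ ≤ powSumBound r (m + 1) := powSumBound_add_rpow_le hr0 hr1 m.cast_nonneg

/-- Upper bound of Lemma 1: for `0 < r ≤ 1`,
`∑_{i=1}^n i^r ≤ (r/(r+1)) n^r (n+1)^r / ((n+1)^r - n^r)`. -/
theorem sum_pow_upper_bound (n : ℕ) (hn : 1 ≤ n) (r : ℝ) (hr0 : 0 < r) (hr1 : r ≤ 1) :
    ∑ i ∈ Finset.Icc 1 n, (i : ℝ) ^ r ≤
      (r / (r + 1)) * ((n : ℝ) ^ r * ((n : ℝ) + 1) ^ r /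
        (((n : ℝ) + 1) ^ r - (n : ℝ) ^ r)) :=
  sum_pow_upper_bound_general n r hr0 hr1
end

section
/- For every real 0 < α < 1 and every integer n ≥ 1, with Λ_n = ∑_{k=1}^n k^α, one has (Λ_n / n^α) · log( (1 + (n+1)^α/Λ_n) · (n^α/(n+1)^α) ) ≤ 1/(α+1). Equivalently, the weights λ_k = k^α satisfy condition (5) of the paper with M = 1/(α+1). -/
/-!
Write `Λ = Λ_n`, `a = n^α`, `c = (n+1)^α`. The argument of the logarithm is `a/c + a/Λ`, and
`log y ≤ t` as soon as `y ≤ 1 + t + t²/2`; with `t = a/((α+1)Λ)` this reduces the claim to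
`α/(α+1) - a/(2(α+1)²Λ) ≤ Λ(1/a - 1/c)`.
Midpoint concavity of `t ↦ t^α` gives `(α+1)Λ ≥ (n+½)^(α+1) - (½)^(α+1)`, comparison with the
integral gives `(α+1)Λ ≤ (n+1)^(α+1)`, and midpoint convexity of `t ↦ t^(-α-1)` gives
`1/a - 1/c ≥ α/(n+½)^(α+1)`. Multiplying the last two lower bounds yields the claim up to an
error term `α(½)^(α+1)/((α+1)(n+½)^(α+1))`, which `a/(2(α+1)²Λ)` absorbs because
`(3/2)^(α+1) ≥ 1 + (α+1)/2 ≥ 2α` (Bernoulli).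
-/

open Real Finset

lemma rpow_add_sub_rpow_sub_le {α y t : ℝ} (hα₀ : 0 ≤ α) (hα₁ : α ≤ 1) (ht : 0 ≤ t)
    (hty : t ≤ y) :
    (y + t) ^ (α + 1) - (y - t) ^ (α + 1) ≤ 2 * (α + 1) * y ^ α * t := by
  have hp : 1 ≤ α + 1 := by linarith
  set f : ℝ → ℝ := fun s ↦ (y + s) ^ (α + 1) - (y - s) ^ (α + 1)
  have hf : ∀ s, HasDerivAt f ((α + 1) * ((y + s) ^ α + (y - s) ^ α)) s := fun s ↦ by
    refine ((((hasDerivAt_id' s).const_add y).rpow_const (Or.inr hp)).sub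
      (((hasDerivAt_id' s).const_sub y).rpow_const (Or.inr hp))).congr_deriv ?_
    rw [add_sub_cancel_right]
    ring
  have hmid : ∀ s ∈ Set.Icc 0 y, (y + s) ^ α + (y - s) ^ α ≤ 2 * y ^ α := fun s hs ↦ by
    have := (concaveOn_rpow hα₀ hα₁).2 (show y + s ∈ Set.Ici 0 by simp; linarith [hs.1])
      (show y - s ∈ Set.Ici 0 by simp; linarith [hs.2]) (show (0 : ℝ) ≤ 1 / 2 by norm_num)
      (show (0 : ℝ) ≤ 1 / 2 by norm_num) (by norm_num)
    simp only [smul_eq_mul] at this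
    rw [show 1 / 2 * (y + s) + 1 / 2 * (y - s) = y by ring] at this
    linarith
  have := (convex_Icc 0 y).image_sub_le_mul_sub_of_deriv_le (C := 2 * (α + 1) * y ^ α)
    (fun s _ ↦ (hf s).continuousAt.continuousWithinAt)
    (fun s _ ↦ (hf s).differentiableAt.differentiableWithinAt)
    (fun s hs ↦ by
      rw [(hf s).deriv]
      nlinarith [hmid s (interior_subset hs)])
    0 ⟨le_rfl, ht.trans hty⟩ t ⟨ht, hty⟩ ht
  simpa [f] using this

lemma two_mul_rpow_le_rpow_sub_add_rpow_add {q y s : ℝ} (hq : q ≤ 0) (hs : 0 ≤ s)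
    (hsy : s < y) :
    2 * y ^ q ≤ (y - s) ^ q + (y + s) ^ q := by
  have h : (y ^ q) ^ 2 ≤ (y - s) ^ q * (y + s) ^ q := by
    rw [← mul_rpow (by linarith) (by linarith), sq, ← mul_rpow (by linarith) (by linarith)]
    exact rpow_le_rpow_of_nonpos (by nlinarith) (by nlinarith) hq
  nlinarith [sq_nonneg ((y - s) ^ q - (y + s) ^ q), rpow_pos_of_pos (by linarith : 0 < y) q,
    rpow_pos_of_pos (by linarith : 0 < y - s) q, rpow_pos_of_pos (by linarith : 0 < y + s) q]

lemma two_mul_mul_rpow_le_rpow_sub_sub_rpow_add {α y t : ℝ} (hα : 0 ≤ α) (ht : 0 ≤ t)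
    (hty : t < y) :
    2 * α * y ^ (-α - 1) * t ≤ (y - t) ^ (-α) - (y + t) ^ (-α) := by
  set f : ℝ → ℝ := fun s ↦ (y - s) ^ (-α) - (y + s) ^ (-α)
  have hf : ∀ s ∈ Set.Icc 0 t,
      HasDerivAt f (α * ((y - s) ^ (-α - 1) + (y + s) ^ (-α - 1))) s := fun s hs ↦ by
    refine ((((hasDerivAt_id' s).const_sub y).rpow_const (p := -α)
      (Or.inl (by linarith [hs.2]))).sub (((hasDerivAt_id' s).const_add y).rpow_const
      (p := -α) (Or.inl (by linarith [hs.1])))).congr_deriv ?_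
    ring
  have := (convex_Icc 0 t).mul_sub_le_image_sub_of_le_deriv
    (fun s hs ↦ (hf s hs).continuousAt.continuousWithinAt)
    (fun s hs ↦ (hf s (interior_subset hs)).differentiableAt.differentiableWithinAt)
    (C := 2 * α * y ^ (-α - 1))
    (fun s hs ↦ by
      have hs' := interior_subset hs
      rw [(hf s hs').deriv, mul_comm 2, mul_assoc]
      exact mul_le_mul_of_nonneg_left
        (two_mul_rpow_le_rpow_sub_add_rpow_add (by linarith) hs'.1 (by linarith [hs'.2])) hα)
    0 ⟨le_rfl, ht⟩ t ⟨ht, le_rfl⟩ ht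
  simpa [f] using this

lemma mul_rpow_le_rpow_add_one_sub_rpow {α y : ℝ} (hα : 0 ≤ α) (hy : 0 ≤ y) :
    (α + 1) * y ^ α ≤ (y + 1) ^ (α + 1) - y ^ (α + 1) := by
  have hf : ∀ s, HasDerivAt (fun s ↦ s ^ (α + 1)) ((α + 1) * s ^ α) s := fun s ↦ by
    simpa using hasDerivAt_rpow_const (x := s) (Or.inr (by linarith : 1 ≤ α + 1))
  have := (convex_Icc y (y + 1)).mul_sub_le_image_sub_of_le_deriv
    (fun s _ ↦ (hf s).continuousAt.continuousWithinAt)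
    (fun s _ ↦ (hf s).differentiableAt.differentiableWithinAt)
    (fun s hs ↦ by
      rw [(hf s).deriv]
      exact mul_le_mul_of_nonneg_left
        (rpow_le_rpow hy (interior_subset hs).1 hα) (by linarith))
    y ⟨le_rfl, by linarith⟩ (y + 1) ⟨by linarith, le_rfl⟩ (by linarith)
  simpa using this

lemma rpow_add_half_sub_le_mul_sum_rpow {α : ℝ} (hα₀ : 0 ≤ α) (hα₁ : α ≤ 1) (n : ℕ) :
    ((n : ℝ) + 1 / 2) ^ (α + 1) - (1 / 2) ^ (α + 1) ≤
      (α + 1) * ∑ k ∈ Icc 1 n, (k : ℝ) ^ α := by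
  induction n with
  | zero => simp
  | succ m ih =>
    have := rpow_add_sub_rpow_sub_le hα₀ hα₁ (y := m + 1) (t := 1 / 2) (by norm_num)
      (by linarith [m.cast_nonneg (α := ℝ)])
    rw [show (m : ℝ) + 1 - 1 / 2 = m + 1 / 2 by ring] at this
    rw [sum_Icc_succ_top (by omega), mul_add]
    push_cast
    linarith

lemma mul_sum_rpow_le_rpow_add_one_sub_one {α : ℝ} (hα : 0 ≤ α) (n : ℕ) :
    (α + 1) * ∑ k ∈ Icc 1 n, (k : ℝ) ^ α ≤ ((n : ℝ) + 1) ^ (α + 1) - 1 := by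
  induction n with
  | zero => simp
  | succ m ih =>
    have := mul_rpow_le_rpow_add_one_sub_rpow hα (y := m + 1) (by positivity)
    rw [sum_Icc_succ_top (by omega), mul_add]
    push_cast
    linarith

lemma two_mul_mul_rpow_le_rpow_mul_rpow {α x : ℝ} (hα₀ : 0 ≤ α) (hα₁ : α ≤ 1) (hx : 1 ≤ x) :
    2 * α * ((x + 1) / 2) ^ (α + 1) ≤ x ^ α * (x + 1 / 2) ^ (α + 1) := by
  have hp : 0 ≤ α + 1 := by linarith
  have hbernoulli : 2 * α ≤ (3 / 2) ^ (α + 1) := by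
    have := one_add_mul_self_le_rpow_one_add (s := 1 / 2) (by norm_num) (p := α + 1)
      (by linarith)
    norm_num at this
    linarith
  calc 2 * α * ((x + 1) / 2) ^ (α + 1)
      ≤ (3 / 2) ^ (α + 1) * ((x + 1) / 2) ^ (α + 1) := by gcongr
    _ = (3 / 2 * ((x + 1) / 2)) ^ (α + 1) := (mul_rpow (by norm_num) (by linarith)).symm
    _ ≤ (x + 1 / 2) ^ (α + 1) := rpow_le_rpow (by linarith) (by linarith) hp
    _ ≤ x ^ α * (x + 1 / 2) ^ (α + 1) :=
      le_mul_of_one_le_left (by positivity) (one_le_rpow hx hα₀)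

lemma one_sub_inv_sub_le_mul_inv_sub_inv {α x L : ℝ} (hα₀ : 0 ≤ α) (hα₁ : α ≤ 1)
    (hx : 1 ≤ x) (hL : 0 < L) (hlow : (x + 1 / 2) ^ (α + 1) - (1 / 2) ^ (α + 1) ≤ (α + 1) * L)
    (hup : (α + 1) * L ≤ (x + 1) ^ (α + 1)) :
    1 - 1 / (α + 1) - x ^ α / (2 * (α + 1) ^ 2 * L) ≤
      L * ((x ^ α)⁻¹ - ((x + 1) ^ α)⁻¹) := by
  have hdiff : α / (x + 1 / 2) ^ (α + 1) ≤ (x ^ α)⁻¹ - ((x + 1) ^ α)⁻¹ := by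
    have := two_mul_mul_rpow_le_rpow_sub_sub_rpow_add hα₀ (y := x + 1 / 2) (t := 1 / 2)
      (by norm_num) (by linarith)
    rw [show x + 1 / 2 - 1 / 2 = x by ring, show x + 1 / 2 + 1 / 2 = x + 1 by ring,
      show -α - 1 = -(α + 1) by ring, rpow_neg (by linarith), rpow_neg (by linarith),
      rpow_neg (by linarith)] at this
    rw [div_eq_mul_inv]
    linarith
  have hcore := two_mul_mul_rpow_le_rpow_mul_rpow hα₀ hα₁ hx
  rw [div_eq_mul_one_div, mul_rpow (by linarith) (by norm_num)] at hcore
  have htail : α * (1 / 2) ^ (α + 1) / ((α + 1) * (x + 1 / 2) ^ (α + 1)) ≤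
      x ^ α / (2 * (α + 1) ^ 2 * L) := by
    rw [div_le_div_iff₀ (by positivity) (by positivity)]
    have : 0 ≤ 2 * α * (1 / 2) ^ (α + 1) := by positivity
    nlinarith [mul_le_mul_of_nonneg_left hup this]
  calc 1 - 1 / (α + 1) - x ^ α / (2 * (α + 1) ^ 2 * L)
      ≤ ((x + 1 / 2) ^ (α + 1) - (1 / 2) ^ (α + 1)) / (α + 1) *
          (α / (x + 1 / 2) ^ (α + 1)) := by
        have : ((x + 1 / 2) ^ (α + 1) - (1 / 2) ^ (α + 1)) / (α + 1) *
            (α / (x + 1 / 2) ^ (α + 1)) =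
            1 - 1 / (α + 1) - α * (1 / 2) ^ (α + 1) / ((α + 1) * (x + 1 / 2) ^ (α + 1)) := by
          field_simp
          ring
        linarith
    _ ≤ L * (α / (x + 1 / 2) ^ (α + 1)) := by
        gcongr
        rw [div_le_iff₀ (by linarith)]
        linarith
    _ ≤ L * ((x ^ α)⁻¹ - ((x + 1) ^ α)⁻¹) := by gcongr

lemma div_mul_log_le_one_div_of_le {L a c p : ℝ} (hL : 0 < L) (ha : 0 < a) (hc : 0 < c)
    (hp : 0 < p) (h : 1 - 1 / p - a / (2 * p ^ 2 * L) ≤ L * (a⁻¹ - c⁻¹)) :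
    L / a * log ((1 + c / L) * (a / c)) ≤ 1 / p := by
  set t := a / (p * L) with ht
  have hquad : (1 + c / L) * (a / c) ≤ 1 + t + t ^ 2 / 2 := by
    have : 1 + t + t ^ 2 / 2 - (1 + c / L) * (a / c) =
        a / L * (L * (a⁻¹ - c⁻¹) - (1 - 1 / p - a / (2 * p ^ 2 * L))) := by
      rw [ht]
      field_simp
      ring
    nlinarith [mul_nonneg (div_pos ha hL).le (sub_nonneg.2 h)]
  have hlog : log ((1 + c / L) * (a / c)) ≤ t :=
    (log_le_iff_le_exp (by positivity)).2
      (hquad.trans (quadratic_le_exp_of_nonneg (by positivity)))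
  calc L / a * log ((1 + c / L) * (a / c)) ≤ L / a * t := by gcongr
    _ = 1 / p := by rw [ht]; field_simp

/-- Inequality (3.1): the weights `λ_k = k^α` satisfy condition (5) with
`M = 1/(α+1)`, i.e. `(Λ_n/n^α) log((1 + (n+1)^α/Λ_n)(n^α/(n+1)^α)) ≤ 1/(α+1)`. -/
theorem condition_five_for_powers (α : ℝ) (hα0 : 0 < α) (hα1 : α < 1)
    (n : ℕ) (hn : 1 ≤ n)
    (Lam : ℕ → ℝ) (hLam : ∀ m, Lam m = ∑ k ∈ Finset.Icc 1 m, (k : ℝ) ^ α) :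
    (Lam n / (n : ℝ) ^ α) *
      Real.log ((1 + ((n : ℝ) + 1) ^ α / Lam n) * ((n : ℝ) ^ α / ((n : ℝ) + 1) ^ α)) ≤
      1 / (α + 1) := by
  have hx : (1 : ℝ) ≤ n := by exact_mod_cast hn
  have hL : 0 < Lam n := by
    rw [hLam]
    exact sum_pos (fun k hk ↦ rpow_pos_of_pos (Nat.cast_pos.2 (mem_Icc.1 hk).1) α)
      (nonempty_Icc.2 hn)
  have hlow := rpow_add_half_sub_le_mul_sum_rpow hα0.le hα1.le n
  have hup := mul_sum_rpow_le_rpow_add_one_sub_one hα0.le n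
  rw [← hLam] at hlow hup
  exact div_mul_log_le_one_div_of_le hL (by positivity) (by positivity) (by linarith)
    (one_sub_inv_sub_le_mul_inv_sub_inv hα0.le hα1.le hx hL hlow (by linarith))
end

section
/- Fix 0 < α < 1 and define g(x) = 1 + (α+1)x − (α + (1−α²)x)·(1+x)^α. Then g(x) > 0 for all 0 < x < 1. -/
/-- With `g(x) = 1 + (α+1)x - (α + (1-α²)x)(1+x)^α`, one has `g(x) > 0` for
`0 < x < 1`. -/
theorem g_pos (α : ℝ) (hα0 : 0 < α) (hα1 : α < 1) (x : ℝ) (hx0 : 0 < x) (hx1 : x < 1) :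
    0 < 1 + (α + 1) * x - (α + (1 - α ^ 2) * x) * (1 + x) ^ α := by
  have hB : (1 + x) ^ α ≤ 1 + α * x :=
    rpow_one_add_le_one_add_mul_self (by linarith) hα0.le hα1.le
  have hc : 0 < α + (1 - α ^ 2) * x := by nlinarith
  have h1 : (α + (1 - α ^ 2) * x) * (1 + x) ^ α ≤ (α + (1 - α ^ 2) * x) * (1 + α * x) :=
    mul_le_mul_of_nonneg_left hB hc.le
  nlinarith [mul_pos hx0 hx0, mul_pos hα0 hx0, sq_nonneg (1 - x), mul_pos (mul_pos hα0 hx0) hx0]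
end

section
/- Let (λ_k)_{k≥1} satisfy λ_k > 0 for all k, set Λ_n = ∑_{k=1}^n λ_k, and suppose M = sup_{n≥1} (Λ_n/λ_n)·log((Λ_{n+1}/λ_{n+1})/(Λ_n/λ_n)) is finite. Let μ > e^M and let (Ω_k)_{k≥1} be a sequence of positive reals with Ω_1 = 1/μ such that for every k ≥ 1 with 0 < Ω_k < Λ_k/λ_k, the recursion Ω_{k+1}^{Λ_{k+1}} = μ^{−λ_{k+1}} · ( Ω_k·Λ_k / ( λ_{k+1}·(Λ_k/λ_k − Ω_k) ) )^{Λ_k} holds. Then for every k ≥ 1 one has Ω_k < (Λ_k/λ_k)/(Λ_{k+1}/λ_{k+1}); in particular 0 < Ω_k < Λ_k/λ_k for all k, so the recursion is well defined. -/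
/-!
Write `q_n = Λ_n/λ_n`, so `q_1 = 1` and `Λ_n = λ_n q_n`. Induction on `k`. If `Ω_k < q_k/q_{k+1}`,
then `Ω_k Λ_{k+1} < λ_{k+1} q_k`, i.e. the base `Ω_k Λ_k/(λ_{k+1}(q_k - Ω_k))` of the recursion is
`< 1`, hence `Ω_{k+1}^{Λ_{k+1}} < μ^{-λ_{k+1}}`. By definition of `M` and `μ > e^M`,
`Λ_{k+1} log(q_{k+2}/q_{k+1}) = λ_{k+1} q_{k+1} log(q_{k+2}/q_{k+1}) < λ_{k+1} log μ`, i.e.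
`μ^{-λ_{k+1}} < (q_{k+1}/q_{k+2})^{Λ_{k+1}}`; taking `Λ_{k+1}`-th roots closes the induction.
The base case `1/μ < 1/q_2` is the same estimate for `n = 1`.
-/

open Real

lemma mul_div_mul_sub_lt_one {w q L b : ℝ} (hq : 0 ≤ q) (hL : 0 ≤ L) (hb : 0 < b)
    (hw : w < q / ((L + b) / b)) : w * L / (b * (q - w)) < 1 := by
  have hLb : 0 < L + b := by linarith
  rw [div_div_eq_mul_div, lt_div_iff₀ hLb] at hw
  have hwq : w < q := by nlinarith
  rw [div_lt_one (mul_pos hb (by linarith))]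
  linarith

lemma rpow_neg_lt_div_rpow_mul {μ b p r : ℝ} (hμ : 0 < μ) (hb : 0 < b) (hp : 0 < p)
    (hr : 0 < r) (h : p * log (r / p) < log μ) : μ ^ (-b) < (p / r) ^ (b * p) := by
  rw [rpow_def_of_pos hμ, rpow_def_of_pos (div_pos hp hr), exp_lt_exp,
    ← inv_div, log_inv]
  nlinarith

section Weights

variable {lam Lam : ℕ → ℝ}

lemma Lam_succ (hLam : ∀ n, Lam n = ∑ k ∈ Finset.Icc 1 n, lam k) (n : ℕ) :
    Lam (n + 1) = Lam n + lam (n + 1) := by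
  rw [hLam, hLam, Finset.sum_Icc_succ_top (by omega)]

lemma Lam_pos (hlam : ∀ k ≥ 1, 0 < lam k) (hLam : ∀ n, Lam n = ∑ k ∈ Finset.Icc 1 n, lam k)
    {n : ℕ} (hn : 1 ≤ n) : 0 < Lam n := by
  rw [hLam]
  exact Finset.sum_pos (fun i hi ↦ hlam i (Finset.mem_Icc.mp hi).1) ⟨1, by simp [hn]⟩

lemma Lam_one_div_lam_one (hlam : ∀ k ≥ 1, 0 < lam k)
    (hLam : ∀ n, Lam n = ∑ k ∈ Finset.Icc 1 n, lam k) : Lam 1 / lam 1 = 1 := by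
  simp [hLam, (hlam 1 le_rfl).ne']

lemma one_lt_Lam_succ_div (hlam : ∀ k ≥ 1, 0 < lam k)
    (hLam : ∀ n, Lam n = ∑ k ∈ Finset.Icc 1 n, lam k) {n : ℕ} (hn : 1 ≤ n) :
    1 < Lam (n + 1) / lam (n + 1) := by
  rw [Lam_succ hLam, one_lt_div (hlam _ (by omega))]
  linarith [Lam_pos hlam hLam hn]

lemma Lam_div_div_Lam_succ_div_lt (hlam : ∀ k ≥ 1, 0 < lam k)
    (hLam : ∀ n, Lam n = ∑ k ∈ Finset.Icc 1 n, lam k) {k : ℕ} (hk : 1 ≤ k) :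
    Lam k / lam k / (Lam (k + 1) / lam (k + 1)) < Lam k / lam k :=
  div_lt_self (div_pos (Lam_pos hlam hLam hk) (hlam k hk)) (one_lt_Lam_succ_div hlam hLam hk)

lemma lt_div_Lam_succ_div_of_rpow_eq (hlam : ∀ k ≥ 1, 0 < lam k)
    (hLam : ∀ n, Lam n = ∑ k ∈ Finset.Icc 1 n, lam k) {μ : ℝ} (hμ : 0 < μ) {k : ℕ}
    (hk : 1 ≤ k) {w w' : ℝ} (hw : 0 < w) (hw' : 0 ≤ w')
    (hwk : w < Lam k / lam k / (Lam (k + 1) / lam (k + 1)))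
    (hrec : w' ^ Lam (k + 1) =
      μ ^ (-lam (k + 1)) * (w * Lam k / (lam (k + 1) * (Lam k / lam k - w))) ^ Lam k)
    (hlog : Lam (k + 1) / lam (k + 1) *
      log (Lam (k + 2) / lam (k + 2) / (Lam (k + 1) / lam (k + 1))) < log μ) :
    w' < Lam (k + 1) / lam (k + 1) / (Lam (k + 2) / lam (k + 2)) := by
  have hlamk : 0 < lam k := hlam k hk
  have hlamk1 : 0 < lam (k + 1) := hlam (k + 1) (by omega)
  have hLamk : 0 < Lam k := Lam_pos hlam hLam hk
  have hq1 : 1 < Lam (k + 1) / lam (k + 1) := one_lt_Lam_succ_div hlam hLam hk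
  have hq2 : 1 < Lam (k + 2) / lam (k + 2) := one_lt_Lam_succ_div hlam hLam (by omega)
  have hbase : w * Lam k / (lam (k + 1) * (Lam k / lam k - w)) < 1 := by
    refine mul_div_mul_sub_lt_one (div_pos hLamk hlamk).le hLamk.le hlamk1 ?_
    rwa [← Lam_succ hLam]
  have hbase_pos : 0 < w * Lam k / (lam (k + 1) * (Lam k / lam k - w)) := by
    have hwq := hwk.trans (Lam_div_div_Lam_succ_div_lt hlam hLam hk)
    exact div_pos (mul_pos hw hLamk) (mul_pos hlamk1 (sub_pos.mpr hwq))
  have hlt_μ : w' ^ Lam (k + 1) < μ ^ (-lam (k + 1)) := by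
    rw [hrec]
    exact mul_lt_of_lt_one_right (rpow_pos_of_pos hμ _)
      (rpow_lt_one hbase_pos.le hbase hLamk)
  have hμ_lt :=
    rpow_neg_lt_div_rpow_mul hμ hlamk1 (one_pos.trans hq1) (one_pos.trans hq2) hlog
  rw [mul_div_cancel₀ _ hlamk1.ne'] at hμ_lt
  exact (rpow_lt_rpow_iff hw' (div_pos (one_pos.trans hq1) (one_pos.trans hq2)).le
    (Lam_pos hlam hLam (by omega))).mp (hlt_μ.trans hμ_lt)

end Weights

/-- Inequality (2.3): if `μ > e^M`, the sequence `Ω_k` defined by `Ω_1 = 1/μ`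
and the recursion (2.2) satisfies `Ω_k < (Λ_k/λ_k)/(Λ_{k+1}/λ_{k+1})` for all
`k ≥ 1`; in particular `0 < Ω_k < Λ_k/λ_k`, so the recursion is well defined. -/
theorem Omega_bound
    (lam : ℕ → ℝ) (hlam : ∀ k ≥ 1, 0 < lam k)
    (Lam : ℕ → ℝ) (hLam : ∀ n, Lam n = ∑ k ∈ Finset.Icc 1 n, lam k)
    (M : ℝ)
    (hM : IsLUB {x : ℝ | ∃ n ≥ 1, x = (Lam n / lam n) *
        Real.log ((Lam (n + 1) / lam (n + 1)) / (Lam n / lam n))} M)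
    (μ : ℝ) (hμ : Real.exp M < μ)
    (Ω : ℕ → ℝ) (hΩpos : ∀ k ≥ 1, 0 < Ω k) (hΩ1 : Ω 1 = 1 / μ)
    (hrec : ∀ k ≥ 1, 0 < Ω k → Ω k < Lam k / lam k →
      Ω (k + 1) ^ Lam (k + 1) =
        μ ^ (-lam (k + 1)) *
          (Ω k * Lam k / (lam (k + 1) * (Lam k / lam k - Ω k))) ^ Lam k) :
    ∀ k ≥ 1, Ω k < (Lam k / lam k) / (Lam (k + 1) / lam (k + 1)) := by
  have hμpos : 0 < μ := (exp_pos M).trans hμ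
  have hlog : ∀ n ≥ 1, Lam n / lam n * log (Lam (n + 1) / lam (n + 1) / (Lam n / lam n)) <
      log μ := fun n hn ↦
    (hM.1 ⟨n, hn, rfl⟩).trans_lt ((lt_log_iff_exp_lt hμpos).mpr hμ)
  intro k hk
  induction k, hk using Nat.le_induction with
  | base =>
    have hlog1 := hlog 1 le_rfl
    rw [Lam_one_div_lam_one hlam hLam] at hlog1 ⊢
    have h := rpow_neg_lt_div_rpow_mul hμpos one_pos one_pos
      (one_pos.trans (one_lt_Lam_succ_div hlam hLam le_rfl)) hlog1
    rw [rpow_neg_one, one_mul, rpow_one, ← one_div] at h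
    rwa [hΩ1]
  | succ k hk ih =>
    have hΩk := hΩpos k hk
    have hΩk_lt := ih.trans (Lam_div_div_Lam_succ_div_lt hlam hLam hk)
    exact lt_div_Lam_succ_div_of_rpow_eq hlam hLam hμpos hk hΩk (hΩpos _ (by omega)).le ih
      (hrec k hk hΩk hΩk_lt) (hlog (k + 1) (by omega))
end

section
/- Let (λ_k)_{k≥1} satisfy λ_k > 0 for all k, set Λ_n = ∑_{k=1}^n λ_k, suppose M = sup_{n≥1} (Λ_n/λ_n)·log((Λ_{n+1}/λ_{n+1})/(Λ_n/λ_n)) is finite, and let μ > e^M. If Ω_{k+1} > 0 satisfies Ω_{k+1}^{Λ_{k+1}} = μ^{−λ_{k+1}} · ( Ω_k·Λ_k / ( λ_{k+1}·(Λ_k/λ_k − Ω_k) ) )^{Λ_k} where 0 < Ω_k < (Λ_k/λ_k)/(Λ_{k+1}/λ_{k+1}), then Ω_{k+1} < μ^{−λ_{k+1}/Λ_{k+1}} < (Λ_{k+1}/λ_{k+1})/(Λ_{k+2}/λ_{k+2}). -/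
/-!
Write `a_n = Λ_n / λ_n`. The bound `Ω_k < a_k / a_{k+1}` is exactly the statement that the base
`Ω_k Λ_k / (λ_{k+1} (a_k - Ω_k))` of the recursion lies in `[0, 1)`, so the recursion gives
`Ω_{k+1}^{Λ_{k+1}} < μ^{-λ_{k+1}}`. The second inequality is the definition of `M` at `n = k + 1`:
`a_{k+1} log (a_{k+2} / a_{k+1}) ≤ M < log μ`.
-/

open Real

lemma mul_lt_mul_sub_of_lt_div_div {Ω a L l : ℝ} (hLl : 0 < L + l)
    (h : Ω < a / ((L + l) / l)) : Ω * L < l * (a - Ω) := by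
  rw [div_div_eq_mul_div, lt_div_iff₀ hLl] at h
  linarith

lemma lt_of_rpow_lt_rpow {x y p : ℝ} (hy : 0 ≤ y) (hp : 0 ≤ p) (h : x ^ p < y ^ p) : x < y := by
  by_contra! hyx
  exact (rpow_le_rpow hy hyx hp).not_gt h

lemma lt_rpow_neg_div_of_rpow_eq {x b μ l p q : ℝ} (hμ : 0 < μ) (hq : 0 < q) (hb₀ : 0 ≤ b)
    (hb₁ : b < 1) (hp : 0 < p) (h : x ^ q = μ ^ (-l) * b ^ p) : x < μ ^ (-(l / q)) := by
  have hroot : (μ ^ (-(l / q))) ^ q = μ ^ (-l) := by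
    rw [← rpow_mul hμ.le, neg_mul, div_mul_cancel₀ l hq.ne']
  refine lt_of_rpow_lt_rpow (rpow_pos_of_pos hμ _).le hq.le ?_
  rw [h, hroot]
  exact mul_lt_of_lt_one_right (rpow_pos_of_pos hμ _) (rpow_lt_one hb₀ hb₁ hp)

lemma rpow_neg_inv_lt_div {a b M μ : ℝ} (ha : 0 < a) (hb : 0 < b) (hM : a * log (b / a) ≤ M)
    (hμ : exp M < μ) : μ ^ (-a⁻¹) < a / b := by
  have hμ₀ : 0 < μ := (exp_pos M).trans hμ
  have hlog : a * log (b / a) < log μ := hM.trans_lt ((lt_log_iff_exp_lt hμ₀).mpr hμ)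
  rw [← log_lt_log_iff (rpow_pos_of_pos hμ₀ _) (div_pos ha hb), log_rpow hμ₀, ← inv_div,
    log_inv, neg_mul, neg_lt_neg_iff, inv_mul_eq_div, lt_div_iff₀ ha]
  linarith

theorem Omega_induction_step_general
    (lam : ℕ → ℝ) (hlam : ∀ k ≥ 1, 0 < lam k)
    (Lam : ℕ → ℝ) (hLam : ∀ n, Lam n = ∑ k ∈ Finset.Icc 1 n, lam k)
    (M : ℝ)
    (hM : IsLUB {x : ℝ | ∃ n ≥ 1, x = (Lam n / lam n) *
        Real.log ((Lam (n + 1) / lam (n + 1)) / (Lam n / lam n))} M)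
    (μ : ℝ) (hμ : Real.exp M < μ)
    (k : ℕ) (hk : 1 ≤ k) (Ωk Ωk1 : ℝ)
    (hΩk0 : 0 < Ωk) (hΩk : Ωk < (Lam k / lam k) / (Lam (k + 1) / lam (k + 1)))
    (hrec : Ωk1 ^ Lam (k + 1) =
      μ ^ (-lam (k + 1)) *
        (Ωk * Lam k / (lam (k + 1) * (Lam k / lam k - Ωk))) ^ Lam k) :
    Ωk1 < μ ^ (-(lam (k + 1) / Lam (k + 1))) ∧
      μ ^ (-(lam (k + 1) / Lam (k + 1))) <
        (Lam (k + 1) / lam (k + 1)) / (Lam (k + 2) / lam (k + 2)) := by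
  have hLam_pos : ∀ n ≥ 1, 0 < Lam n := fun n hn => by
    rw [hLam]
    exact Finset.sum_pos (fun i hi => hlam i (Finset.mem_Icc.mp hi).1) ⟨1, by simp [hn]⟩
  have hLam_succ : Lam (k + 1) = Lam k + lam (k + 1) := by
    rw [hLam, hLam, Finset.sum_Icc_succ_top (by omega)]
  have hlam₁ := hlam (k + 1) (by omega)
  have hLam₀ := hLam_pos k hk
  have hLam₁ := hLam_pos (k + 1) (by omega)
  constructor
  · have hnum : 0 < Ωk * Lam k := mul_pos hΩk0 hLam₀
    have hbase : Ωk * Lam k < lam (k + 1) * (Lam k / lam k - Ωk) :=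
      mul_lt_mul_sub_of_lt_div_div (hLam_succ ▸ hLam₁) (hLam_succ ▸ hΩk)
    exact lt_rpow_neg_div_of_rpow_eq ((exp_pos M).trans hμ) hLam₁
      (div_nonneg hnum.le (hnum.trans hbase).le) ((div_lt_one (hnum.trans hbase)).mpr hbase)
      hLam₀ hrec
  · simpa only [inv_div] using rpow_neg_inv_lt_div (div_pos hLam₁ hlam₁)
      (div_pos (hLam_pos (k + 2) (by omega)) (hlam (k + 2) (by omega)))
      (hM.1 ⟨k + 1, by omega, rfl⟩) hμ

/-- Induction step for inequality (2.3): if `0 < Ω_k < (Λ_k/λ_k)/(Λ_{k+1}/λ_{k+1})`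
and `Ω_{k+1} > 0` satisfies the recursion (2.2), then
`Ω_{k+1} < μ^{-λ_{k+1}/Λ_{k+1}} < (Λ_{k+1}/λ_{k+1})/(Λ_{k+2}/λ_{k+2})`. -/
theorem Omega_induction_step
    (lam : ℕ → ℝ) (hlam : ∀ k ≥ 1, 0 < lam k)
    (Lam : ℕ → ℝ) (hLam : ∀ n, Lam n = ∑ k ∈ Finset.Icc 1 n, lam k)
    (M : ℝ)
    (hM : IsLUB {x : ℝ | ∃ n ≥ 1, x = (Lam n / lam n) *
        Real.log ((Lam (n + 1) / lam (n + 1)) / (Lam n / lam n))} M)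
    (μ : ℝ) (hμ : Real.exp M < μ)
    (k : ℕ) (hk : 1 ≤ k) (Ωk Ωk1 : ℝ)
    (hΩk0 : 0 < Ωk) (hΩk : Ωk < (Lam k / lam k) / (Lam (k + 1) / lam (k + 1)))
    (hΩk1 : 0 < Ωk1)
    (hrec : Ωk1 ^ Lam (k + 1) =
      μ ^ (-lam (k + 1)) *
        (Ωk * Lam k / (lam (k + 1) * (Lam k / lam k - Ωk))) ^ Lam k) :
    Ωk1 < μ ^ (-(lam (k + 1) / Lam (k + 1))) ∧
      μ ^ (-(lam (k + 1) / Lam (k + 1))) <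
        (Lam (k + 1) / lam (k + 1)) / (Lam (k + 2) / lam (k + 2)) :=
  Omega_induction_step_general lam hlam Lam hLam M hM μ hμ k hk Ωk Ωk1 hΩk0 hΩk hrec
end

section
/- Fix 0 < α ≤ 1. For every integer n ≥ 1, one has 1 + (n+1)^α / ∑_{k=1}^n k^α ≤ 1 + (α+1)/n, and combining with the upper bound ∑_{k=1}^n k^α ≤ (α/(α+1))·n^α(n+1)^α/((n+1)^α − n^α), inequality (3.1) — namely (∑_{k=1}^n k^α / n^α)·log( (1 + (n+1)^α/∑_{k=1}^n k^α)·(n/(n+1))^α ) ≤ 1/(α+1) — follows from the inequality α·( log(1 + (α+1)/n) − α·log(1+1/n) ) ≤ 1 − (1+1/n)^{−α}. That is: for 0 < α < 1 and n ≥ 1, the inequality α·(log(1+(α+1)/n) − α·log(1+1/n)) ≤ 1 − (1+1/n)^{−α} implies (∑_{k=1}^n k^α / n^α)·log( (1 + (n+1)^α/∑_{k=1}^n k^α)·(n/(n+1))^α ) ≤ 1/(α+1). -/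
/-!
Write `S = ∑_{k ≤ n} k^α`. Bernoulli's inequality and induction give `n (n+1)^α ≤ (α+1) S`, so the
argument of the logarithm is at most `(1 + (α+1)/n) (n/(n+1))^α`, and (3.2) bounds the logarithm by
`((n+1)^α - n^α) / (α (n+1)^α)`. Inequality (3.1) then follows from the upper bound
`(α+1) S ((n+1)^α - n^α) ≤ α n^α (n+1)^α`, again by induction on `n`: after clearing denominators,
its inductive step is `(1+x)^α + (1-x)^α ≤ α + 1 + (1-α) (1+x)^α (1-x)^α` at `x = 1/(n+1)`. Both
sides agree at `x = 0`, and the difference is nondecreasing on `[0, 1]` because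
`(1+x)^(1-α) - (1-x)^(1-α) ≥ 2 (1-α) x`, itself a monotonicity argument.
-/

open Real Set

theorem two_mul_mul_le_one_add_rpow_sub_one_sub_rpow_s18 {β x : ℝ} (hβ0 : 0 ≤ β) (hβ1 : β ≤ 1)
    (hx : x ∈ Icc (0 : ℝ) 1) : 2 * β * x ≤ (1 + x) ^ β - (1 - x) ^ β := by
  let f : ℝ → ℝ := fun t ↦ (1 + t) ^ β - (1 - t) ^ β - 2 * β * t
  have hmono : MonotoneOn f (Icc 0 1) := by
    refine monotoneOn_of_hasDerivWithinAt_nonneg (convex_Icc 0 1)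
      (f' := fun t ↦ β * ((1 + t) ^ (β - 1) + (1 - t) ^ (β - 1) - 2)) ?_ ?_ ?_
    · exact Continuous.continuousOn (by fun_prop (disch := assumption))
    · rw [interior_Icc]
      rintro t ⟨ht0, ht1⟩
      have h₁ := ((hasDerivAt_id' t).const_add 1).rpow_const (p := β) (Or.inl (by linarith))
      have h₂ := ((hasDerivAt_id' t).const_sub 1).rpow_const (p := β) (Or.inl (by linarith))
      exact ((h₁.sub h₂).sub ((hasDerivAt_id' t).const_mul (2 * β))).hasDerivWithinAt.congr_deriv
        (by ring)
    · rw [interior_Icc]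
      rintro t ⟨ht0, ht1⟩
      have hu : (1 + t) ^ (β - 1) ≤ 1 := rpow_le_one_of_one_le_of_nonpos (by linarith) (by linarith)
      have hv : 1 ≤ (1 - t) ^ (β - 1) :=
        one_le_rpow_of_pos_of_le_one_of_nonpos (by linarith) (by linarith) (by linarith)
      have huv : 1 ≤ (1 + t) ^ (β - 1) * (1 - t) ^ (β - 1) := by
        rw [← mul_rpow (by linarith) (by linarith)]
        exact one_le_rpow_of_pos_of_le_one_of_nonpos (by nlinarith) (by nlinarith) (by linarith)
      -- `u + v ≥ 1 + u v ≥ 2` for `u = (1 + t) ^ (β - 1) ≤ 1 ≤ v = (1 - t) ^ (β - 1)`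
      have := mul_nonneg (sub_nonneg.2 hu) (sub_nonneg.2 hv)
      exact mul_nonneg hβ0 (by nlinarith)
  simpa [f] using hmono ⟨le_rfl, zero_le_one⟩ hx hx.1

theorem one_add_rpow_add_one_sub_rpow_le {α x : ℝ} (hα0 : 0 ≤ α) (hα1 : α ≤ 1)
    (hx : x ∈ Icc (0 : ℝ) 1) :
    (1 + x) ^ α + (1 - x) ^ α ≤ α + 1 + (1 - α) * ((1 + x) ^ α * (1 - x) ^ α) := by
  let f : ℝ → ℝ := fun t ↦
    α + 1 + (1 - α) * ((1 + t) ^ α * (1 - t) ^ α) - (1 + t) ^ α - (1 - t) ^ α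
  have hmono : MonotoneOn f (Icc 0 1) := by
    refine monotoneOn_of_hasDerivWithinAt_nonneg (convex_Icc 0 1)
      (f' := fun t ↦ α * ((1 - t) ^ (α - 1) - (1 + t) ^ (α - 1)
        - 2 * (1 - α) * t * ((1 + t) ^ (α - 1) * (1 - t) ^ (α - 1)))) ?_ ?_ ?_
    · exact Continuous.continuousOn (by fun_prop (disch := assumption))
    · rw [interior_Icc]
      rintro t ⟨ht0, ht1⟩
      have h₁ := ((hasDerivAt_id' t).const_add 1).rpow_const (p := α) (Or.inl (by linarith))
      have h₂ := ((hasDerivAt_id' t).const_sub 1).rpow_const (p := α) (Or.inl (by linarith))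
      refine (((((h₁.mul h₂).const_mul (1 - α)).const_add (α + 1)).sub h₁).sub h₂
        ).hasDerivWithinAt.congr_deriv ?_
      rw [rpow_sub_one (by linarith), rpow_sub_one (by linarith)]
      field_simp
      ring
    · rw [interior_Icc]
      rintro t ⟨ht0, ht1⟩
      have hB := two_mul_mul_le_one_add_rpow_sub_one_sub_rpow_s18 (x := t) (β := 1 - α)
        (by linarith) (by linarith) ⟨ht0.le, ht1.le⟩
      have hP : (1 + t) ^ (α - 1) * (1 + t) ^ (1 - α) = 1 := by
        rw [← rpow_add (by linarith)]; simp
      have hQ : (1 - t) ^ (α - 1) * (1 - t) ^ (1 - α) = 1 := by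
        rw [← rpow_add (by linarith)]; simp
      have hPQ : 0 ≤ (1 + t) ^ (α - 1) * (1 - t) ^ (α - 1) := by positivity
      have := mul_le_mul_of_nonneg_right hB hPQ
      refine mul_nonneg hα0 ?_
      linear_combination this + (1 - t) ^ (α - 1) * hP - (1 + t) ^ (α - 1) * hQ
  have := hmono ⟨le_rfl, zero_le_one⟩ hx hx.1
  norm_num [f] at this
  linarith

theorem add_one_rpow_add_sub_one_rpow_mul_rpow_le {α y : ℝ} (hα0 : 0 ≤ α) (hα1 : α ≤ 1)
    (hy : 1 ≤ y) :
    ((y + 1) ^ α + (y - 1) ^ α) * y ^ α ≤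
      (α + 1) * (y ^ α * y ^ α) + (1 - α) * ((y + 1) ^ α * (y - 1) ^ α) := by
  have hy0 : 0 < y := by linarith
  have hx : 1 / y ∈ Icc (0 : ℝ) 1 := ⟨by positivity, by rw [div_le_one hy0]; exact hy⟩
  have h := one_add_rpow_add_one_sub_rpow_le hα0 hα1 hx
  rw [one_add_div hy0.ne', one_sub_div hy0.ne', div_rpow (by linarith) hy0.le,
    div_rpow (by linarith) hy0.le] at h
  have hyα : 0 < y ^ α := rpow_pos_of_pos hy0 α
  field_simp at h
  linarith

theorem mul_add_one_rpow_le {α x : ℝ} (hα0 : 0 ≤ α) (hα1 : α ≤ 1) (hx : 0 < x) :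
    x * (x + 1) ^ α ≤ (x + α) * x ^ α := by
  have hB := rpow_one_add_le_one_add_mul_self (s := 1 / x) (by linarith [one_div_pos.2 hx]) hα0 hα1
  calc x * (x + 1) ^ α = x * x ^ α * (1 + 1 / x) ^ α := by
        rw [mul_assoc, ← mul_rpow hx.le (by positivity)]; field_simp
    _ ≤ x * x ^ α * (1 + α * (1 / x)) := by gcongr
    _ = (x + α) * x ^ α := by field_simp

theorem nat_mul_add_one_rpow_le_sum_rpow_s18 {α : ℝ} (hα0 : 0 ≤ α) (hα1 : α ≤ 1) (n : ℕ) :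
    (n : ℝ) * (n + 1) ^ α ≤ (α + 1) * ∑ k ∈ Finset.Icc 1 n, (k : ℝ) ^ α := by
  induction n with
  | zero => simp
  | succ n ih =>
    have hstep := mul_add_one_rpow_le hα0 hα1 (x := (n : ℝ) + 1) (by positivity)
    rw [Finset.sum_Icc_succ_top (by omega)]
    push_cast
    linarith

theorem sum_rpow_mul_add_one_rpow_sub_rpow_le {α : ℝ} (hα0 : 0 < α) (hα1 : α ≤ 1) (n : ℕ) :
    (α + 1) * (∑ k ∈ Finset.Icc 1 n, (k : ℝ) ^ α) * (((n : ℝ) + 1) ^ α - (n : ℝ) ^ α) ≤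
      α * (n : ℝ) ^ α * ((n : ℝ) + 1) ^ α := by
  induction n with
  | zero => simp [zero_rpow hα0.ne']
  | succ n ih =>
    rw [Finset.sum_Icc_succ_top (by omega)]
    push_cast
    set S := ∑ k ∈ Finset.Icc 1 n, (k : ℝ) ^ α
    have hcrux := add_one_rpow_add_sub_one_rpow_mul_rpow_le hα0.le hα1
      (y := (n : ℝ) + 1) (by simp)
    rw [add_sub_cancel_right] at hcrux
    set c := (n : ℝ) ^ α
    set b := ((n : ℝ) + 1) ^ α
    set a := ((n : ℝ) + 1 + 1) ^ α
    have hb : 0 < b := by positivity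
    have hcb : c < b := rpow_lt_rpow (by positivity) (by linarith) hα0
    have hba : b < a := rpow_lt_rpow (by positivity) (by linarith) hα0
    have key : (α + 1) * (S + b) * (a - b) * (b - c) ≤ α * b * a * (b - c) := by
      nlinarith [mul_le_mul_of_nonneg_right ih (sub_pos.2 hba).le,
        mul_le_mul_of_nonneg_right hcrux hb.le]
    have := le_of_mul_le_mul_right key (sub_pos.2 hcb)
    linarith

theorem log_one_add_mul_div_add_one_rpow_le {α x t u : ℝ} (hx : 0 < x) (ht : 0 ≤ t)
    (htu : t ≤ u) :
    log ((1 + t) * (x / (x + 1)) ^ α) ≤ log (1 + u) - α * log (1 + 1 / x) := by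
  have hinv : x / (x + 1) = (1 + 1 / x)⁻¹ := by field_simp
  rw [log_mul (by positivity) (by positivity), log_rpow (by positivity), hinv, log_inv]
  have := log_le_log (by positivity) (by linarith : 1 + t ≤ 1 + u)
  linarith

/-- Reduction step in the proof of Theorem 2: for `0 < α < 1` and `n ≥ 1`,
inequality (3.2) implies inequality (3.1). -/
theorem ineq_32_implies_31 (α : ℝ) (hα0 : 0 < α) (hα1 : α < 1) (n : ℕ) (hn : 1 ≤ n)
    (h32 : α * (Real.log (1 + (α + 1) / n) - α * Real.log (1 + 1 / n)) ≤
      1 - (1 + 1 / (n : ℝ)) ^ (-α)) :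
    ((∑ k ∈ Finset.Icc 1 n, (k : ℝ) ^ α) / (n : ℝ) ^ α) *
      Real.log ((1 + ((n : ℝ) + 1) ^ α / ∑ k ∈ Finset.Icc 1 n, (k : ℝ) ^ α) *
        ((n : ℝ) / ((n : ℝ) + 1)) ^ α) ≤ 1 / (α + 1) := by
  set S := ∑ k ∈ Finset.Icc 1 n, (k : ℝ) ^ α
  have hn0 : (0 : ℝ) < n := by exact_mod_cast hn
  have hS : 0 < S := Finset.sum_pos (fun k hk ↦ by have := (Finset.mem_Icc.1 hk).1; positivity)
    ⟨1, by simp [hn]⟩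
  have hratio : ((n : ℝ) + 1) ^ α / S ≤ (α + 1) / n := by
    rw [div_le_div_iff₀ hS hn0]
    linarith [nat_mul_add_one_rpow_le_sum_rpow_s18 hα0.le hα1.le n]
  have hlog := log_one_add_mul_div_add_one_rpow_le (α := α) hn0 (by positivity) hratio
  have hpow : (1 + 1 / (n : ℝ)) ^ (-α) = (n : ℝ) ^ α / ((n : ℝ) + 1) ^ α := by
    rw [rpow_neg (by positivity), ← inv_rpow (by positivity), ← div_rpow hn0.le (by positivity)]
    field_simp
  have hE := sum_rpow_mul_add_one_rpow_sub_rpow_le hα0 hα1.le n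
  calc S / (n : ℝ) ^ α * log ((1 + ((n : ℝ) + 1) ^ α / S) * ((n : ℝ) / ((n : ℝ) + 1)) ^ α)
      ≤ S / (n : ℝ) ^ α * ((1 - (1 + 1 / (n : ℝ)) ^ (-α)) / α) :=
        mul_le_mul_of_nonneg_left (hlog.trans ((le_div_iff₀' hα0).2 h32)) (by positivity)
    _ ≤ 1 / (α + 1) := by
        rw [hpow, div_mul_div_comm, div_le_div_iff₀ (by positivity) (by positivity)]
        field_simp
        linarith
end
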